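/- arXiv:2101.10639 — 5 statements merged into one kernel-verified Lean document; each statement's English description precedes it below -/
import Mathlib

section
/- For any binary tree T with n leaves, ∑_{i<j} |T_{ij}| = (n choose 2)·n − (n choose 3), where the sum is over unordered pairs of leaves and |T_{ij}| is the number of leaves under the lowest common ancestor of i and j. In particular this value is the same for all binary trees with n leaves. -/
open Finset

/-- A rooted binary tree with leaves labeled by `α`. -/
inductive BTree (α : Type) : Type where
  | leaf : α → BTree α
  | node : BTree α → BTree α → BTree α

namespace BTree

variable {α β : Type}

/-- Relabel the leaves of a binary tree. -/
def map (f : α → β) : BTree α → BTree β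
  | leaf a => leaf (f a)
  | node l r => node (map f l) (map f r)

/-- The list of leaf labels (left to right). -/
def leavesList : BTree α → List α
  | leaf a => [a]
  | node l r => l.leavesList ++ r.leavesList

/-- The set of leaf labels. -/
def leaves [DecidableEq α] (t : BTree α) : Finset α := t.leavesList.toFinset

/-- The set of leaves of the subtree rooted at the lowest common ancestor of `i` and `j`,
i.e. the leaf set of `T_{ij}`. -/
def lcaLeaves [DecidableEq α] : BTree α → α → α → Finset α
  | leaf a, _, _ => {a}
  | node l r, i, j =>
    if i ∈ l.leaves ∧ j ∈ l.leaves then l.lcaLeaves i j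
    else if i ∈ r.leaves ∧ j ∈ r.leaves then r.lcaLeaves i j
    else l.leaves ∪ r.leaves

/-- `t` is a hierarchical clustering tree on the whole type `α`:
its leaves are pairwise distinct and in bijection with `α`. -/
def IsHC [DecidableEq α] [Fintype α] (t : BTree α) : Prop :=
  t.leavesList.Nodup ∧ t.leaves = Finset.univ

end BTree

/-- The unordered pairs `i < j` of `Fin n`. -/
def pairsFin (n : ℕ) : Finset (Fin n × Fin n) :=
  Finset.univ.filter fun q => q.1 < q.2

/-- The revenue objective `∑_{i<j} w_{ij} (n - |T_{ij}|)`. -/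
noncomputable def rev (n : ℕ) (w : Fin n → Fin n → ℝ) (t : BTree (Fin n)) : ℝ :=
  ∑ q ∈ pairsFin n, w q.1 q.2 * ((n : ℝ) - ((t.lcaLeaves q.1 q.2).card : ℝ))

/-- The dissimilarity objective `∑_{i<j} w_{ij} |T_{ij}|`. -/
noncomputable def dis (n : ℕ) (w : Fin n → Fin n → ℝ) (t : BTree (Fin n)) : ℝ :=
  ∑ q ∈ pairsFin n, w q.1 q.2 * ((t.lcaLeaves q.1 q.2).card : ℝ)

/- ============ auxiliary lemmas ============ -/

namespace BTreeAux

open BTree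

variable {α : Type} [DecidableEq α]

lemma leaves_node (l r : BTree α) : (BTree.node l r).leaves = l.leaves ∪ r.leaves := by
  simp [BTree.leaves, BTree.leavesList]

lemma lca_subset (t : BTree α) (i j : α) : t.lcaLeaves i j ⊆ t.leaves := by
  induction t with
  | leaf a => simp [BTree.lcaLeaves, BTree.leaves, BTree.leavesList]
  | node l r ihl ihr =>
    rw [leaves_node]
    simp only [BTree.lcaLeaves]
    split_ifs with h1 h2
    · exact ihl.trans subset_union_left
    · exact ihr.trans subset_union_right
    · exact subset_rfl

lemma mem_lca_left (t : BTree α) {i j : α} (hi : i ∈ t.leaves) (hj : j ∈ t.leaves) :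
    i ∈ t.lcaLeaves i j := by
  induction t with
  | leaf a =>
    simp only [BTree.lcaLeaves]
    simpa [BTree.leaves, BTree.leavesList] using hi
  | node l r ihl ihr =>
    rw [leaves_node, mem_union] at hi hj
    simp only [BTree.lcaLeaves]
    split_ifs with h1 h2
    · exact ihl h1.1 h1.2
    · exact ihr h2.1 h2.2
    · rw [mem_union]; exact hi

lemma mem_lca_right (t : BTree α) {i j : α} (hi : i ∈ t.leaves) (hj : j ∈ t.leaves) :
    j ∈ t.lcaLeaves i j := by
  induction t with
  | leaf a =>
    simp only [BTree.lcaLeaves]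
    simpa [BTree.leaves, BTree.leavesList] using hj
  | node l r ihl ihr =>
    rw [leaves_node, mem_union] at hi hj
    simp only [BTree.lcaLeaves]
    split_ifs with h1 h2
    · exact ihl h1.1 h1.2
    · exact ihr h2.1 h2.2
    · rw [mem_union]; exact hj

lemma triple (t : BTree α) (hn : t.leavesList.Nodup) {i j k : α}
    (hi : i ∈ t.leaves) (hj : j ∈ t.leaves) (hk : k ∈ t.leaves)
    (hij : i ≠ j) (hik : i ≠ k) (hjk : j ≠ k) :
    (if k ∈ t.lcaLeaves i j then 1 else 0) + (if j ∈ t.lcaLeaves i k then 1 else 0)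
      + (if i ∈ t.lcaLeaves j k then 1 else 0) = 2 := by
  induction t with
  | leaf a =>
    exfalso
    simp [BTree.leaves, BTree.leavesList] at hi hj
    exact hij (hi.trans hj.symm)
  | node l r ihl ihr =>
    have hn' : l.leavesList.Nodup ∧ r.leavesList.Nodup ∧ l.leavesList.Disjoint r.leavesList := by
      have h : l.leavesList.Nodup ∧ r.leavesList.Nodup ∧
          ∀ a ∈ l.leavesList, ∀ b ∈ r.leavesList, ¬a = b := by
        simpa [BTree.leavesList, List.nodup_append] using hn
      exact ⟨h.1, h.2.1, fun a ha hb => h.2.2 a ha a hb rfl⟩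
    obtain ⟨hnl, hnr, hdis⟩ := hn'
    have hdisF : ∀ x : α, x ∈ l.leaves → x ∉ r.leaves := by
      intro x hx hx'
      exact hdis (by simpa [BTree.leaves] using hx) (by simpa [BTree.leaves] using hx')
    have hLL : ∀ x y : α, x ∈ l.leaves → y ∈ l.leaves →
        (BTree.node l r).lcaLeaves x y = l.lcaLeaves x y := by
      intro x y hx hy; simp [BTree.lcaLeaves, hx, hy]
    have hRR : ∀ x y : α, x ∈ r.leaves → y ∈ r.leaves →
        (BTree.node l r).lcaLeaves x y = r.lcaLeaves x y := by
      intro x y hx hy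
      have hx' : x ∉ l.leaves := fun h => hdisF x h hx
      simp [BTree.lcaLeaves, hx', hx, hy]
    have hMix : ∀ x y : α, ¬(x ∈ l.leaves ∧ y ∈ l.leaves) → ¬(x ∈ r.leaves ∧ y ∈ r.leaves) →
        (BTree.node l r).lcaLeaves x y = l.leaves ∪ r.leaves := by
      intro x y h1 h2; simp [BTree.lcaLeaves, h1, h2]
    rw [leaves_node, mem_union] at hi hj hk
    rcases hi with hi | hi <;> rcases hj with hj | hj <;> rcases hk with hk | hk
    · -- LLL
      rw [hLL i j hi hj, hLL i k hi hk, hLL j k hj hk]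
      exact ihl hnl hi hj hk
    · -- LLR
      rw [hLL i j hi hj,
          hMix i k (fun h => hdisF k h.2 hk) (fun h => hdisF i hi h.1),
          hMix j k (fun h => hdisF k h.2 hk) (fun h => hdisF j hj h.1)]
      rw [if_neg (fun h => hdisF k (lca_subset l i j h) hk),
          if_pos (mem_union_left _ hj), if_pos (mem_union_left _ hi)]
    · -- LRL
      rw [hMix i j (fun h => hdisF j h.2 hj) (fun h => hdisF i hi h.1),
          hLL i k hi hk,
          hMix j k (fun h => hdisF j h.1 hj) (fun h => hdisF k hk h.2)]
      rw [if_pos (mem_union_left _ hk),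
          if_neg (fun h => hdisF j (lca_subset l i k h) hj),
          if_pos (mem_union_left _ hi)]
    · -- LRR
      rw [hMix i j (fun h => hdisF j h.2 hj) (fun h => hdisF i hi h.1),
          hMix i k (fun h => hdisF k h.2 hk) (fun h => hdisF i hi h.1),
          hRR j k hj hk]
      rw [if_pos (mem_union_right _ hk), if_pos (mem_union_right _ hj),
          if_neg (fun h => hdisF i hi (lca_subset r j k h))]
    · -- RLL
      rw [hMix i j (fun h => hdisF i h.1 hi) (fun h => hdisF j hj h.2),
          hMix i k (fun h => hdisF i h.1 hi) (fun h => hdisF k hk h.2),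
          hLL j k hj hk]
      rw [if_pos (mem_union_left _ hk), if_pos (mem_union_left _ hj),
          if_neg (fun h => hdisF i (lca_subset l j k h) hi)]
    · -- RLR
      rw [hMix i j (fun h => hdisF i h.1 hi) (fun h => hdisF j hj h.2),
          hRR i k hi hk,
          hMix j k (fun h => hdisF k h.2 hk) (fun h => hdisF j hj h.1)]
      rw [if_pos (mem_union_right _ hk),
          if_neg (fun h => hdisF j hj (lca_subset r i k h)),
          if_pos (mem_union_right _ hi)]
    · -- RRL
      rw [hRR i j hi hj,
          hMix i k (fun h => hdisF i h.1 hi) (fun h => hdisF k hk h.2),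
          hMix j k (fun h => hdisF j h.1 hj) (fun h => hdisF k hk h.2)]
      rw [if_neg (fun h => hdisF k hk (lca_subset r i j h)),
          if_pos (mem_union_right _ hj), if_pos (mem_union_right _ hi)]
    · -- RRR
      rw [hRR i j hi hj, hRR i k hi hk, hRR j k hj hk]
      exact ihr hnr hi hj hk

end BTreeAux

/-- indicator of `k ∈ T_{ij}`. -/
def gfun (n : ℕ) (t : BTree (Fin n)) (i j k : Fin n) : ℕ :=
  if k ∈ t.lcaLeaves i j then 1 else 0

lemma sum_id_mul (n : ℕ) : ∑ b ∈ Finset.range n, b * (n - 1 - b) = n.choose 3 := by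
  induction n with
  | zero => simp
  | succ m ih =>
    rw [Finset.sum_range_succ]
    have hcong : ∀ b ∈ Finset.range m, b * (m + 1 - 1 - b) = b * (m - 1 - b) + b := by
      intro b hb; rw [Finset.mem_range] at hb
      have h : m + 1 - 1 - b = (m - 1 - b) + 1 := by omega
      rw [h, Nat.mul_add, Nat.mul_one]
    rw [Finset.sum_congr rfl hcong, Finset.sum_add_distrib, ih, Finset.sum_range_id]
    have hm : m + 1 - 1 - m = 0 := by omega
    rw [hm, Nat.mul_zero, Nat.add_zero]
    have h2 : m * (m - 1) / 2 = m.choose 2 := (Nat.choose_two_right m).symm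
    rw [h2]
    have h3 : (m + 1).choose 3 = m.choose 2 + m.choose 3 := Nat.choose_succ_succ m 2
    omega

lemma final_arith (n : ℕ) :
    n.choose 2 + n.choose 2 + 2 * n.choose 3 = n.choose 2 * n - n.choose 3 := by
  rcases Nat.lt_or_ge n 2 with h | h
  · interval_cases n <;> decide
  · have h1 : n.choose 3 * 3 = n.choose 2 * (n - 2) := Nat.choose_succ_right_eq n 2
    have h2 : n.choose 2 * (n - 2) = n.choose 2 * n - n.choose 2 * 2 :=
      Nat.mul_sub (n.choose 2) n 2
    have h3 : n.choose 2 * 2 ≤ n.choose 2 * n := Nat.mul_le_mul_left _ h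
    rw [h2] at h1
    generalize hp : n.choose 2 * n = p at h1 h3 ⊢
    omega

/-- For every binary tree `t` on `n` leaves,
`∑_{i<j} |T_{ij}| = C(n,2)·n - C(n,3)`, the same for all binary trees. -/
theorem stmt5 (n : ℕ) (t : BTree (Fin n)) (ht : t.IsHC) :
    ∑ q ∈ pairsFin n, (t.lcaLeaves q.1 q.2).card = n.choose 2 * n - n.choose 3 := by
  obtain ⟨hnd, huniv⟩ := ht
  have hmem : ∀ x : Fin n, x ∈ t.leaves := fun x => huniv ▸ Finset.mem_univ x
  -- |T_ij| as a sum of indicators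
  have hcard : ∀ i j : Fin n, (t.lcaLeaves i j).card = ∑ k : Fin n, gfun n t i j k := by
    intro i j
    unfold gfun
    rw [Finset.sum_ite_mem, Finset.univ_inter, Finset.card_eq_sum_ones]
  -- basic counts
  have hIoi : ∀ i : Fin n, (∑ j : Fin n, if i < j then 1 else 0) = n - 1 - (i : ℕ) := by
    intro i
    rw [← Finset.card_filter]
    have : Finset.univ.filter (fun j => i < j) = Finset.Ioi i := by
      ext x; simp
    rw [this, Fin.card_Ioi]
  have hP : (∑ i : Fin n, ∑ j : Fin n, if i < j then 1 else 0) = n.choose 2 := by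
    simp only [hIoi]
    rw [Fin.sum_univ_eq_sum_range (fun m => n - 1 - m) n]
    rw [show (∑ m ∈ Finset.range n, (n - 1 - m)) = ∑ m ∈ Finset.range n, m from
      Finset.sum_range_reflect (fun m => m) n]
    rw [Finset.sum_range_id, Nat.choose_two_right]
  have hT : (∑ a : Fin n, ∑ b : Fin n, ∑ c : Fin n, if a < b ∧ b < c then 1 else 0)
      = n.choose 3 := by
    rw [Finset.sum_comm]
    have hinner : ∀ b : Fin n,
        (∑ a : Fin n, ∑ c : Fin n, if a < b ∧ b < c then 1 else 0)
          = (b : ℕ) * (n - 1 - (b : ℕ)) := by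
      intro b
      have step : ∀ a : Fin n,
          (∑ c : Fin n, if a < b ∧ b < c then 1 else 0)
            = (if a < b then (n - 1 - (b : ℕ)) else 0) := by
        intro a
        by_cases h : a < b
        · simp only [h, true_and, if_pos h]
          exact hIoi b
        · simp [h]
      simp only [step]
      rw [← Finset.sum_filter, Finset.sum_const, smul_eq_mul]
      have : Finset.univ.filter (fun a => a < b) = Finset.Iio b := by
        ext x; simp
      rw [this, Fin.card_Iio]
    simp only [hinner]
    rw [Fin.sum_univ_eq_sum_range (fun m => m * (n - 1 - m)) n]
    exact sum_id_mul n
  -- indicator facts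
  have hgi : ∀ i j : Fin n, gfun n t i j i = 1 := fun i j =>
    if_pos (BTreeAux.mem_lca_left t (hmem i) (hmem j))
  have hgj : ∀ i j : Fin n, gfun n t i j j = 1 := fun i j =>
    if_pos (BTreeAux.mem_lca_right t (hmem i) (hmem j))
  -- pointwise splitting
  have wsplit : ∀ i j k : Fin n,
      (if i < j then gfun n t i j k else 0) =
        (if i < j ∧ k = i then 1 else 0) + (if i < j ∧ k = j then 1 else 0)
        + (if k < i ∧ i < j then gfun n t i j k else 0)
        + (if i < k ∧ k < j then gfun n t i j k else 0)
        + (if i < j ∧ j < k then gfun n t i j k else 0) := by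
    intro i j k
    by_cases hij : i < j
    · rw [if_pos hij]
      rcases lt_trichotomy k i with h | rfl | h
      · rw [if_neg (fun hc => absurd hc.2 h.ne),
            if_neg (fun hc => absurd hc.2 (h.trans hij).ne),
            if_pos ⟨h, hij⟩,
            if_neg (fun hc => absurd (h.trans hc.1) (lt_irrefl k)),
            if_neg (fun hc => absurd ((h.trans hij).trans hc.2) (lt_irrefl k))]
        simp
      · rw [if_pos ⟨hij, rfl⟩,
            if_neg (fun hc => absurd hc.2 hij.ne),
            if_neg (fun hc => lt_irrefl k hc.1),
            if_neg (fun hc => absurd hc.2 (lt_asymm hij))]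
        rw [hgi k j]
      · rcases lt_trichotomy k j with h2 | rfl | h2
        · rw [if_neg (fun hc => absurd hc.2 h.ne'),
              if_neg (fun hc => absurd hc.2 h2.ne),
              if_neg (fun hc => absurd hc.1 (lt_asymm h)),
              if_pos ⟨h, h2⟩,
              if_neg (fun hc => absurd hc.2 (lt_asymm h2))]
          simp
        · rw [if_neg (fun hc => absurd hc.2 hij.ne'),
              if_pos ⟨hij, rfl⟩,
              if_neg (fun hc => absurd hc.1 (lt_asymm hij)),
              if_neg (fun hc => lt_irrefl k hc.2)]
          rw [hgj i k]
        · rw [if_neg (fun hc => absurd hc.2 (hij.trans h2).ne'),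
              if_neg (fun hc => absurd hc.2 h2.ne'),
              if_neg (fun hc => absurd hc.1 (lt_asymm (hij.trans h2))),
              if_neg (fun hc => absurd hc.2 (lt_asymm h2)),
              if_pos ⟨hij, h2⟩]
          simp
    · rw [if_neg hij, if_neg (fun hc => hij hc.1), if_neg (fun hc => hij hc.1),
          if_neg (fun hc => hij hc.2), if_neg (fun hc => hij (hc.1.trans hc.2)),
          if_neg (fun hc => hij hc.1)]
  -- the triple sum lemma
  have htr : ∀ a b c : Fin n, a < b → b < c →
      gfun n t b c a + gfun n t a c b + gfun n t a b c = 2 := by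
    intro a b c h1 h2
    have h := BTreeAux.triple t hnd (hmem a) (hmem b) (hmem c)
      h1.ne (h1.trans h2).ne h2.ne
    unfold gfun at h ⊢
    rw [← h]; ring
  -- main rewriting
  have e1 : ∑ q ∈ pairsFin n, (t.lcaLeaves q.1 q.2).card
      = ∑ i : Fin n, ∑ j : Fin n, ∑ k : Fin n, if i < j then gfun n t i j k else 0 := by
    rw [pairsFin, Finset.sum_filter, Fintype.sum_prod_type]
    refine Finset.sum_congr rfl fun i _ => Finset.sum_congr rfl fun j _ => ?_
    by_cases h : i < j <;> simp [h, hcard]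
  rw [e1]
  have e2 : (∑ i : Fin n, ∑ j : Fin n, ∑ k : Fin n, if i < j then gfun n t i j k else 0)
      = (∑ i : Fin n, ∑ j : Fin n, ∑ k : Fin n, if i < j ∧ k = i then 1 else 0)
      + (∑ i : Fin n, ∑ j : Fin n, ∑ k : Fin n, if i < j ∧ k = j then 1 else 0)
      + (∑ i : Fin n, ∑ j : Fin n, ∑ k : Fin n, if k < i ∧ i < j then gfun n t i j k else 0)
      + (∑ i : Fin n, ∑ j : Fin n, ∑ k : Fin n, if i < k ∧ k < j then gfun n t i j k else 0)
      + (∑ i : Fin n, ∑ j : Fin n, ∑ k : Fin n, if i < j ∧ j < k then gfun n t i j k else 0) := by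
    simp only [wsplit, Finset.sum_add_distrib]
  rw [e2]
  -- evaluate first two pieces
  have hA1 : (∑ i : Fin n, ∑ j : Fin n, ∑ k : Fin n, if i < j ∧ k = i then 1 else 0)
      = n.choose 2 := by
    rw [← hP]
    refine Finset.sum_congr rfl fun i _ => Finset.sum_congr rfl fun j _ => ?_
    by_cases h : i < j <;> simp [h]
  have hA2 : (∑ i : Fin n, ∑ j : Fin n, ∑ k : Fin n, if i < j ∧ k = j then 1 else 0)
      = n.choose 2 := by
    rw [← hP]
    refine Finset.sum_congr rfl fun i _ => Finset.sum_congr rfl fun j _ => ?_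
    by_cases h : i < j <;> simp [h]
  -- reorder pieces 3 and 4
  have hA3 : (∑ i : Fin n, ∑ j : Fin n, ∑ k : Fin n, if k < i ∧ i < j then gfun n t i j k else 0)
      = ∑ a : Fin n, ∑ b : Fin n, ∑ c : Fin n, if a < b ∧ b < c then gfun n t b c a else 0 := by
    rw [show (∑ i : Fin n, ∑ j : Fin n, ∑ k : Fin n, if k < i ∧ i < j then gfun n t i j k else 0)
        = ∑ i : Fin n, ∑ k : Fin n, ∑ j : Fin n, if k < i ∧ i < j then gfun n t i j k else 0 from
      Finset.sum_congr rfl fun i _ => Finset.sum_comm]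
    exact Finset.sum_comm
  have hA4 : (∑ i : Fin n, ∑ j : Fin n, ∑ k : Fin n, if i < k ∧ k < j then gfun n t i j k else 0)
      = ∑ a : Fin n, ∑ b : Fin n, ∑ c : Fin n, if a < b ∧ b < c then gfun n t a c b else 0 := by
    exact Finset.sum_congr rfl fun i _ => Finset.sum_comm
  rw [hA1, hA2, hA3, hA4]
  -- combine pieces 3+4+5 into the triple sum
  have hA345 : (∑ a : Fin n, ∑ b : Fin n, ∑ c : Fin n, if a < b ∧ b < c then gfun n t b c a else 0)
      + (∑ a : Fin n, ∑ b : Fin n, ∑ c : Fin n, if a < b ∧ b < c then gfun n t a c b else 0)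
      + (∑ a : Fin n, ∑ b : Fin n, ∑ c : Fin n, if a < b ∧ b < c then gfun n t a b c else 0)
      = 2 * n.choose 3 := by
    rw [← hT, Finset.mul_sum]
    simp only [Finset.mul_sum]
    rw [← Finset.sum_add_distrib, ← Finset.sum_add_distrib]
    refine Finset.sum_congr rfl fun a _ => ?_
    rw [← Finset.sum_add_distrib, ← Finset.sum_add_distrib]
    refine Finset.sum_congr rfl fun b _ => ?_
    rw [← Finset.sum_add_distrib, ← Finset.sum_add_distrib]
    refine Finset.sum_congr rfl fun c _ => ?_
    by_cases h : a < b ∧ b < c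
    · rw [if_pos h, if_pos h, if_pos h, if_pos h, htr a b c h.1 h.2, mul_one]
    · simp [h]
  have final := final_arith n
  omega
end

section
/- Let w : pairs → [0,1] be similarity weights on n points, and suppose T* is a binary tree maximizing revenue rev(T) = ∑_{i<j} w_{ij}(n − |T_{ij}|). Then rev(T*) ≥ ((n−2)/3)·∑_{i<j} w_{ij}. -/
open Finset

/-! ### Auxiliary material: caterpillar trees and permutation averaging -/

/-- The caterpillar (left-comb) tree on the list `a :: l`. -/
def cat {α : Type} : α → List α → BTree α
  | a, [] => .leaf a
  | a, b :: l => .node (.leaf a) (cat b l)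

lemma cat_leavesList {α : Type} (a : α) (l : List α) : (cat a l).leavesList = a :: l := by
  induction l generalizing a with
  | nil => rfl
  | cons b l ih => simp [cat, BTree.leavesList, ih]

lemma card_lcaLeaves_cat {α : Type} [DecidableEq α] (a : α) (l : List α)
    (hnd : (a :: l).Nodup) (i j : α) (hi : i ∈ a :: l) (hj : j ∈ a :: l) (hij : i ≠ j) :
    ((cat a l).lcaLeaves i j).card
      = (a :: l).length - min ((a :: l).idxOf i) ((a :: l).idxOf j) := by
  induction l generalizing a with
  | nil =>
      simp at hi hj; exact absurd (hi.trans hj.symm) hij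
  | cons b l ih =>
      have hlv : (cat b l).leaves = (b :: l).toFinset := by
        simp [BTree.leaves, cat_leavesList]
      have hla : (BTree.leaf a).leaves = ({a} : Finset α) := by
        simp [BTree.leaves, BTree.leavesList]
      rw [show cat a (b :: l) = .node (.leaf a) (cat b l) from rfl]
      rw [BTree.lcaLeaves]
      have hnotboth : ¬ (i ∈ (BTree.leaf a).leaves ∧ j ∈ (BTree.leaf a).leaves) := by
        rintro ⟨h1, h2⟩
        rw [hla] at h1 h2
        simp at h1 h2
        exact hij (h1.trans h2.symm)
      rw [if_neg hnotboth]
      by_cases hc : i ∈ (cat b l).leaves ∧ j ∈ (cat b l).leaves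
      · rw [if_pos hc]
        obtain ⟨h1, h2⟩ := hc
        rw [hlv, List.mem_toFinset] at h1 h2
        have hia : i ≠ a := fun h => (List.nodup_cons.mp hnd).1 (h ▸ h1)
        have hja : j ≠ a := fun h => (List.nodup_cons.mp hnd).1 (h ▸ h2)
        have e1 : (a :: b :: l).idxOf i = (b :: l).idxOf i + 1 := by
          rw [List.idxOf_cons_ne _ (id (Ne.symm hia))]
        have e2 : (a :: b :: l).idxOf j = (b :: l).idxOf j + 1 := by
          rw [List.idxOf_cons_ne _ (id (Ne.symm hja))]
        rw [ih b (List.nodup_cons.mp hnd).2 h1 h2]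
        have h1' := List.idxOf_lt_length_iff.mpr h1
        have h2' := List.idxOf_lt_length_iff.mpr h2
        simp only [List.length_cons] at *
        omega
      · rw [if_neg hc]
        have hmin : min ((a :: b :: l).idxOf i) ((a :: b :: l).idxOf j) = 0 := by
          rcases not_and_or.mp hc with h | h
          · have hia : i = a := by
              rcases List.mem_cons.mp hi with h' | h'
              · exact h'
              · exact absurd (by rw [hlv, List.mem_toFinset]; exact h') h
            simp [hia]
          · have hja : j = a := by
              rcases List.mem_cons.mp hj with h' | h'
              · exact h'
              · exact absurd (by rw [hlv, List.mem_toFinset]; exact h') h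
            simp [hja]
        rw [hmin, Nat.sub_zero, hla, hlv]
        have : ({a} : Finset α) ∪ (b :: l).toFinset = (a :: b :: l).toFinset := by
          ext x; simp; tauto
        rw [this, List.toFinset_card_of_nodup hnd]

/-- The caterpillar tree determined by a permutation of `Fin (m+1)`. -/
def catP {m : ℕ} (σ : Equiv.Perm (Fin (m+1))) : BTree (Fin (m+1)) :=
  cat (σ 0) (List.ofFn (fun k : Fin m => σ k.succ))

lemma catP_leavesList {m : ℕ} (σ : Equiv.Perm (Fin (m+1))) :
    (catP σ).leavesList = List.ofFn σ := by
  rw [catP, cat_leavesList, List.ofFn_succ]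

lemma catP_isHC {m : ℕ} (σ : Equiv.Perm (Fin (m+1))) : (catP σ).IsHC := by
  constructor
  · rw [catP_leavesList]; exact List.nodup_ofFn.mpr σ.injective
  · rw [BTree.leaves, catP_leavesList]
    apply Finset.eq_univ_iff_forall.mpr
    intro x
    rw [List.mem_toFinset, List.mem_ofFn]
    exact ⟨σ⁻¹ x, by simp⟩

lemma indexOf_ofFn_perm {m : ℕ} (σ : Equiv.Perm (Fin (m+1))) (i : Fin (m+1)) :
    (List.ofFn σ).idxOf i = ((σ⁻¹ i : Fin (m+1)) : ℕ) := by
  have hf : Function.Injective σ := σ.injective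
  have hmem : i ∈ List.ofFn σ := by
    rw [List.mem_ofFn]; exact ⟨σ⁻¹ i, by simp⟩
  have h1 : (List.ofFn σ).get ⟨(List.ofFn σ).idxOf i, List.idxOf_lt_length_iff.mpr hmem⟩ = i :=
    List.idxOf_get _
  have h2 : (List.ofFn σ).get ⟨(σ⁻¹ i : Fin (m+1)), by simp; exact Nat.lt_succ_iff.mp (σ.symm i).isLt⟩ = i := by
    rw [List.get_ofFn]
    simp
  have := List.nodup_iff_injective_get.mp (List.nodup_ofFn.mpr hf) (h1.trans h2.symm)
  exact congrArg Fin.val this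

lemma card_catP {m : ℕ} (σ : Equiv.Perm (Fin (m+1))) (i j : Fin (m+1)) (hij : i ≠ j) :
    ((catP σ).lcaLeaves i j).card
      = (m+1) - min ((σ⁻¹ i : Fin (m+1)) : ℕ) ((σ⁻¹ j : Fin (m+1)) : ℕ) := by
  have hcons : (σ 0) :: List.ofFn (fun k : Fin m => σ k.succ) = List.ofFn σ :=
    (List.ofFn_succ (f := σ)).symm
  have hnd : ((σ 0) :: List.ofFn (fun k : Fin m => σ k.succ)).Nodup := by
    rw [hcons]; exact List.nodup_ofFn.mpr σ.injective
  have hi : i ∈ (σ 0) :: List.ofFn (fun k : Fin m => σ k.succ) := by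
    rw [hcons, List.mem_ofFn]; exact ⟨σ⁻¹ i, by simp⟩
  have hj : j ∈ (σ 0) :: List.ofFn (fun k : Fin m => σ k.succ) := by
    rw [hcons, List.mem_ofFn]; exact ⟨σ⁻¹ j, by simp⟩
  have h := card_lcaLeaves_cat (σ 0) _ hnd i j hi hj hij
  rw [hcons, List.length_ofFn, indexOf_ofFn_perm, indexOf_ofFn_perm] at h
  exact h

/-- Off-diagonal minimum sum. -/
noncomputable def gmin (n : ℕ) : ℝ :=
  ∑ a ∈ range n, ∑ b ∈ range n, (if a = b then (0:ℝ) else (min a b : ℕ))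

lemma gauss (n : ℕ) : ∑ a ∈ range n, (a : ℝ) = n * (n - 1) / 2 := by
  induction n with
  | zero => simp
  | succ k ih => rw [Finset.sum_range_succ, ih]; push_cast; ring

lemma gmin_eq (n : ℕ) : 3 * gmin n = n * (n - 1) * (n - 2) := by
  induction n with
  | zero => simp [gmin]
  | succ k ih =>
      have step : gmin (k+1) = gmin k + 2 * ∑ a ∈ range k, (a:ℝ) := by
        unfold gmin
        rw [Finset.sum_range_succ]
        have h1 : ∑ a ∈ range k, ∑ b ∈ range (k+1), (if a = b then (0:ℝ) else (min a b : ℕ))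
            = ∑ a ∈ range k, ((∑ b ∈ range k, (if a = b then (0:ℝ) else (min a b : ℕ))) + a) := by
          apply Finset.sum_congr rfl
          intro a ha
          simp only [Finset.mem_range] at ha
          rw [Finset.sum_range_succ, if_neg (by omega)]
          have : min a k = a := by omega
          rw [this]
        have h2 : ∑ b ∈ range (k+1), (if k = b then (0:ℝ) else (min k b : ℕ))
            = ∑ b ∈ range k, (b:ℝ) := by
          rw [Finset.sum_range_succ, if_pos rfl, add_zero]
          apply Finset.sum_congr rfl
          intro b hb
          simp only [Finset.mem_range] at hb
          rw [if_neg (by omega)]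
          have : min k b = b := by omega
          rw [this]
        rw [h1, h2, Finset.sum_add_distrib]
        ring
      rw [step, gauss]
      push_cast
      linear_combination ih

lemma M_eq (n : ℕ) :
    ∑ p ∈ (univ : Finset (Fin n × Fin n)).filter (fun p => p.1 ≠ p.2),
      ((min p.1.val p.2.val : ℕ) : ℝ) = gmin n := by
  rw [Finset.sum_filter, Fintype.sum_prod_type]
  unfold gmin
  rw [← Fin.sum_univ_eq_sum_range
    (fun a => ∑ b ∈ range n, (if a = b then (0:ℝ) else (min a b : ℕ)))]
  apply Finset.sum_congr rfl
  intro a _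
  rw [← Fin.sum_univ_eq_sum_range (fun b => if (a:ℕ) = b then (0:ℝ) else (min (a:ℕ) b : ℕ))]
  apply Finset.sum_congr rfl
  intro b _
  by_cases h : a = b
  · subst h; simp
  · rw [if_pos h, if_neg (fun hv => h (Fin.val_injective hv))]

lemma S_symm {n : ℕ} (i j k l : Fin n) (hij : i ≠ j) (hkl : k ≠ l) :
    ∑ σ : Equiv.Perm (Fin n), ((min ((σ i : Fin n) : ℕ) ((σ j : Fin n) : ℕ) : ℕ) : ℝ)
      = ∑ σ : Equiv.Perm (Fin n), ((min ((σ k : Fin n) : ℕ) ((σ l : Fin n) : ℕ) : ℕ) : ℝ) := by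
  set τ1 := Equiv.swap i k with hτ1
  set τ2 := Equiv.swap (τ1 j) l with hτ2
  set τ : Equiv.Perm (Fin n) := τ1.trans τ2 with hτ
  have hτi : τ i = k := by
    have h1 : τ1 i = k := Equiv.swap_apply_left i k
    have h2 : τ1 j ≠ k := fun h => hij (τ1.injective (h1.trans h.symm))
    simp only [hτ, Equiv.trans_apply, h1]
    exact Equiv.swap_apply_of_ne_of_ne (Ne.symm h2) hkl
  have hτj : τ j = l := by
    simp only [hτ, Equiv.trans_apply]
    exact Equiv.swap_apply_left _ _
  calc ∑ σ : Equiv.Perm (Fin n), ((min ((σ i : Fin n) : ℕ) ((σ j : Fin n) : ℕ) : ℕ) : ℝ)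
      = ∑ σ : Equiv.Perm (Fin n), ((min (((σ * τ⁻¹) k : Fin n) : ℕ) (((σ * τ⁻¹) l : Fin n) : ℕ) : ℕ) : ℝ) := by
        apply Finset.sum_congr rfl
        intro σ _
        have e1 : (σ * τ⁻¹) k = σ i := by
          rw [Equiv.Perm.mul_apply]; congr 1
          rw [← hτi, Equiv.Perm.inv_def, Equiv.symm_apply_apply]
        have e2 : (σ * τ⁻¹) l = σ j := by
          rw [Equiv.Perm.mul_apply]; congr 1
          rw [← hτj, Equiv.Perm.inv_def, Equiv.symm_apply_apply]
        rw [e1, e2]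
    _ = ∑ σ : Equiv.Perm (Fin n), ((min ((σ k : Fin n) : ℕ) ((σ l : Fin n) : ℕ) : ℕ) : ℝ) := by
        apply Fintype.sum_bijective (fun σ => σ * τ⁻¹) (Group.mulRight_bijective τ⁻¹)
        intro σ
        rfl

lemma key {m : ℕ} (hm : 1 ≤ m) (i j : Fin (m+1)) (hij : i ≠ j) :
    ∑ σ : Equiv.Perm (Fin (m+1)),
        ((min ((σ⁻¹ i : Fin (m+1)) : ℕ) ((σ⁻¹ j : Fin (m+1)) : ℕ) : ℕ) : ℝ)
      = (Nat.factorial (m+1) : ℝ) * (((m+1 : ℕ) : ℝ) - 2) / 3 := by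
  have hinv : ∑ σ : Equiv.Perm (Fin (m+1)), ((min ((σ⁻¹ i : Fin (m+1)) : ℕ) ((σ⁻¹ j : Fin (m+1)) : ℕ) : ℕ) : ℝ)
      = ∑ σ : Equiv.Perm (Fin (m+1)), ((min ((σ i : Fin (m+1)) : ℕ) ((σ j : Fin (m+1)) : ℕ) : ℕ) : ℝ) := by
    apply Fintype.sum_bijective (fun σ : Equiv.Perm (Fin (m+1)) => σ⁻¹) (inv_involutive.bijective)
    intro σ; rfl
  rw [hinv]
  set S : ℝ := ∑ σ : Equiv.Perm (Fin (m+1)), ((min ((σ i : Fin (m+1)) : ℕ) ((σ j : Fin (m+1)) : ℕ) : ℕ) : ℝ) with hS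
  set P : Finset (Fin (m+1) × Fin (m+1)) := (univ : Finset (Fin (m+1) × Fin (m+1))).filter (fun p => p.1 ≠ p.2) with hP
  have hPcard : P.card = (m+1) * (m+1) - (m+1) := by
    have : P = (univ : Finset (Fin (m+1))).offDiag := by
      ext p; simp [hP, Finset.mem_offDiag]
    rw [this, Finset.offDiag_card]
    simp
  have htot : ∑ p ∈ P, (∑ σ : Equiv.Perm (Fin (m+1)),
      ((min ((σ p.1 : Fin (m+1)) : ℕ) ((σ p.2 : Fin (m+1)) : ℕ) : ℕ) : ℝ)) = (P.card : ℝ) * S := by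
    rw [Finset.sum_congr rfl (fun p hp => ?_), Finset.sum_const, nsmul_eq_mul]
    exact S_symm p.1 p.2 i j (by simpa [hP] using hp) hij
  have htot2 : ∑ p ∈ P, (∑ σ : Equiv.Perm (Fin (m+1)),
      ((min ((σ p.1 : Fin (m+1)) : ℕ) ((σ p.2 : Fin (m+1)) : ℕ) : ℕ) : ℝ))
      = (Nat.factorial (m+1) : ℝ) * gmin (m+1) := by
    rw [Finset.sum_comm]
    have hfix : ∀ σ : Equiv.Perm (Fin (m+1)),
        ∑ p ∈ P, ((min ((σ p.1 : Fin (m+1)) : ℕ) ((σ p.2 : Fin (m+1)) : ℕ) : ℕ) : ℝ)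
          = ∑ p ∈ P, ((min p.1.val p.2.val : ℕ) : ℝ) := by
      intro σ
      apply Finset.sum_nbij' (fun p => (σ p.1, σ p.2)) (fun p => (σ⁻¹ p.1, σ⁻¹ p.2))
      · intro p hp; simp only [hP, Finset.mem_filter, Finset.mem_univ, true_and] at hp ⊢
        exact fun h => hp (σ.injective h)
      · intro p hp; simp only [hP, Finset.mem_filter, Finset.mem_univ, true_and] at hp ⊢
        exact fun h => hp (σ.symm.injective h)
      · intro p _; simp
      · intro p _; simp
      · intro p _; rfl
    rw [Finset.sum_congr rfl (fun σ _ => hfix σ), Finset.sum_const, nsmul_eq_mul, M_eq]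
    congr 2
    rw [Finset.card_univ, Fintype.card_perm, Fintype.card_fin]
  rw [htot] at htot2
  have hcard : ((P.card : ℕ) : ℝ) = ((m+1:ℕ):ℝ) * ((m+1:ℕ):ℝ) - ((m+1:ℕ):ℝ) := by
    rw [hPcard]
    have h1 : m+1 ≤ (m+1) * (m+1) := Nat.le_mul_of_pos_left (m+1) (by omega)
    push_cast [Nat.cast_sub h1]
    ring
  have hne : ((m+1:ℕ):ℝ) * ((m+1:ℕ):ℝ) - ((m+1:ℕ):ℝ) ≠ 0 := by
    have h2 : (2:ℝ) ≤ ((m+1:ℕ):ℝ) := by exact_mod_cast (by omega : 2 ≤ m+1)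
    nlinarith
  have heq : (((m+1:ℕ):ℝ) * ((m+1:ℕ):ℝ) - ((m+1:ℕ):ℝ)) * S = (Nat.factorial (m+1) : ℝ) * gmin (m+1) := by
    rw [← hcard]; linarith [htot2]
  have hgoal : (((m+1:ℕ):ℝ) * ((m+1:ℕ):ℝ) - ((m+1:ℕ):ℝ)) * (3 * S)
      = (((m+1:ℕ):ℝ) * ((m+1:ℕ):ℝ) - ((m+1:ℕ):ℝ)) * ((Nat.factorial (m+1) : ℝ) * (((m+1:ℕ):ℝ) - 2)) := by
    have hg := gmin_eq (m+1)
    nlinarith [hg, heq]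
  have h3S : 3 * S = (Nat.factorial (m+1) : ℝ) * (((m+1:ℕ):ℝ) - 2) := mul_left_cancel₀ hne hgoal
  linarith

lemma rev_catP {m : ℕ} (w : Fin (m+1) → Fin (m+1) → ℝ) (σ : Equiv.Perm (Fin (m+1))) :
    rev (m+1) w (catP σ) = ∑ q ∈ pairsFin (m+1), w q.1 q.2 *
      ((min ((σ⁻¹ q.1 : Fin (m+1)) : ℕ) ((σ⁻¹ q.2 : Fin (m+1)) : ℕ) : ℕ) : ℝ) := by
  unfold rev
  apply Finset.sum_congr rfl
  intro q hq
  have hlt : q.1 < q.2 := by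
    have := Finset.mem_filter.mp hq
    exact this.2
  have hne : q.1 ≠ q.2 := ne_of_lt hlt
  rw [card_catP σ q.1 q.2 hne]
  congr 1
  have hle : min ((σ⁻¹ q.1 : Fin (m+1)) : ℕ) ((σ⁻¹ q.2 : Fin (m+1)) : ℕ) ≤ m+1 :=
    le_of_lt (lt_of_le_of_lt (min_le_left _ _) (σ⁻¹ q.1).isLt)
  rw [Nat.cast_sub hle]
  push_cast
  ring

/-- If `T` maximizes the revenue objective over all hierarchical clustering trees on `[n]`,
then `rev(T) ≥ ((n-2)/3) ∑_{i<j} w_{ij}`. -/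
theorem stmt7 (n : ℕ) (w : Fin n → Fin n → ℝ)
    (hw : ∀ i j, 0 ≤ w i j ∧ w i j ≤ 1)
    (T : BTree (Fin n)) (hT : T.IsHC)
    (hopt : ∀ S : BTree (Fin n), S.IsHC → rev n w S ≤ rev n w T) :
    rev n w T ≥ (((n : ℝ) - 2) / 3) * ∑ q ∈ pairsFin n, w q.1 q.2 := by
  rcases n with _ | n
  · have h0 : pairsFin 0 = ∅ := by decide
    simp [rev, h0]
  rcases n with _ | m
  · have h1 : pairsFin 1 = ∅ := by decide
    simp [rev, h1]
  -- n = m + 2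
  have hm : 1 ≤ m + 1 := by omega
  have hle : ∀ σ : Equiv.Perm (Fin (m+2)), rev (m+2) w (catP σ) ≤ rev (m+2) w T :=
    fun σ => hopt _ (catP_isHC σ)
  have hsum : ∑ σ : Equiv.Perm (Fin (m+2)), rev (m+2) w (catP σ)
      = (Nat.factorial (m+2) : ℝ) * ((((m+2:ℕ):ℝ) - 2) / 3 * ∑ q ∈ pairsFin (m+2), w q.1 q.2) := by
    calc ∑ σ : Equiv.Perm (Fin (m+2)), rev (m+2) w (catP σ)
        = ∑ σ : Equiv.Perm (Fin (m+2)), ∑ q ∈ pairsFin (m+2), w q.1 q.2 *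
            ((min ((σ⁻¹ q.1 : Fin (m+2)) : ℕ) ((σ⁻¹ q.2 : Fin (m+2)) : ℕ) : ℕ) : ℝ) :=
          Finset.sum_congr rfl (fun σ _ => rev_catP w σ)
      _ = ∑ q ∈ pairsFin (m+2), ∑ σ : Equiv.Perm (Fin (m+2)), w q.1 q.2 *
            ((min ((σ⁻¹ q.1 : Fin (m+2)) : ℕ) ((σ⁻¹ q.2 : Fin (m+2)) : ℕ) : ℕ) : ℝ) :=
          Finset.sum_comm
      _ = ∑ q ∈ pairsFin (m+2), w q.1 q.2 *
            ((Nat.factorial (m+2) : ℝ) * (((m+2 : ℕ) : ℝ) - 2) / 3) := by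
          apply Finset.sum_congr rfl
          intro q hq
          rw [← Finset.mul_sum]
          congr 1
          have hlt : q.1 < q.2 := (Finset.mem_filter.mp hq).2
          exact key hm q.1 q.2 (ne_of_lt hlt)
      _ = (Nat.factorial (m+2) : ℝ) * ((((m+2:ℕ):ℝ) - 2) / 3 * ∑ q ∈ pairsFin (m+2), w q.1 q.2) := by
          rw [Finset.mul_sum, Finset.mul_sum]
          apply Finset.sum_congr rfl
          intro q _
          ring
  have hbound : (Nat.factorial (m+2) : ℝ) * ((((m+2:ℕ):ℝ) - 2) / 3 * ∑ q ∈ pairsFin (m+2), w q.1 q.2)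
      ≤ (Nat.factorial (m+2) : ℝ) * rev (m+2) w T := by
    rw [← hsum]
    calc ∑ σ : Equiv.Perm (Fin (m+2)), rev (m+2) w (catP σ)
        ≤ ∑ σ : Equiv.Perm (Fin (m+2)), rev (m+2) w T :=
          Finset.sum_le_sum (fun σ _ => hle σ)
      _ = (Nat.factorial (m+2) : ℝ) * rev (m+2) w T := by
          rw [Finset.sum_const, Finset.card_univ, Fintype.card_perm, Fintype.card_fin,
            nsmul_eq_mul]
  have hfac : (0:ℝ) < (Nat.factorial (m+2) : ℝ) := by
    exact_mod_cast Nat.factorial_pos (m+2)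
  have := le_of_mul_le_mul_left hbound hfac
  calc rev (m+2) w T ≥ (((m+2:ℕ):ℝ) - 2) / 3 * ∑ q ∈ pairsFin (m+2), w q.1 q.2 := this
    _ = (((m+2 : ℕ):ℝ) - 2) / 3 * ∑ q ∈ pairsFin (m+2), w q.1 q.2 := by norm_num
end

section
/- Let w : pairs → [0,1] be dissimilarity weights on n points and T* a binary tree maximizing dis(T) = ∑_{i<j} w_{ij}|T_{ij}|. Then dis(T*) ≥ (2(n−2)/3)·∑_{i<j} w_{ij}. -/
open Finset

namespace Stmt8Aux

open BTree Finset

def treeOf {α : Type} : α → List α → BTree α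
  | a, [] => .leaf a
  | a, x :: xs => .node (.leaf a) (treeOf x xs)

lemma leavesList_treeOf {α : Type} : ∀ (l : List α) (a : α), (treeOf a l).leavesList = a :: l
  | [], a => rfl
  | x :: xs, a => by
    simp [treeOf, BTree.leavesList, leavesList_treeOf xs x]

lemma leaves_treeOf {α : Type} [DecidableEq α] (l : List α) (a : α) :
    (treeOf a l).leaves = (a :: l).toFinset := by
  rw [BTree.leaves, leavesList_treeOf]

lemma card_lca_treeOf {α : Type} [DecidableEq α] :
    ∀ (l : List α) (a i j : α), (a :: l).Nodup → i ∈ a :: l → j ∈ a :: l → i ≠ j →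
      ((treeOf a l).lcaLeaves i j).card
        = (a :: l).length - min ((a :: l).idxOf i) ((a :: l).idxOf j)
  | [], a, i, j, hn, hi, hj, hij => by
    simp only [List.mem_singleton] at hi hj
    exact absurd (hi.trans hj.symm) hij
  | x :: xs, a, i, j, hn, hi, hj, hij => by
    have hna : a ∉ x :: xs := (List.nodup_cons.mp hn).1
    have hnt : (x :: xs).Nodup := (List.nodup_cons.mp hn).2
    by_cases hia : i = a
    · subst hia
      have hja : j ≠ i := fun h => hij h.symm
      have hj' : j ∈ x :: xs := by
        rcases List.mem_cons.mp hj with h | h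
        · exact absurd h hja
        · exact h
      rw [show treeOf i (x :: xs) = BTree.node (.leaf i) (treeOf x xs) from rfl]
      rw [BTree.lcaLeaves]
      have h1 : ¬ (i ∈ (BTree.leaf i).leaves ∧ j ∈ (BTree.leaf i).leaves) := by
        simp [BTree.leaves, BTree.leavesList]
        exact fun h => hja h
      have h2 : ¬ (i ∈ (treeOf x xs).leaves ∧ j ∈ (treeOf x xs).leaves) := by
        rw [leaves_treeOf]
        simp only [List.mem_toFinset]
        exact fun h => hna h.1
      rw [if_neg h1, if_neg h2]
      have : (BTree.leaf i).leaves ∪ (treeOf x xs).leaves = (i :: x :: xs).toFinset := by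
        rw [leaves_treeOf]
        simp [BTree.leaves, BTree.leavesList]
        ext b; simp; tauto
      rw [this, List.toFinset_card_of_nodup hn, List.idxOf_cons_self]
      simp
    · by_cases hja : j = a
      · subst hja
        have hi' : i ∈ x :: xs := by
          rcases List.mem_cons.mp hi with h | h
          · exact absurd h hia
          · exact h
        rw [show treeOf j (x :: xs) = BTree.node (.leaf j) (treeOf x xs) from rfl]
        rw [BTree.lcaLeaves]
        have h1 : ¬ (i ∈ (BTree.leaf j).leaves ∧ j ∈ (BTree.leaf j).leaves) := by
          simp [BTree.leaves, BTree.leavesList]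
          exact fun h => absurd h hia
        have h2 : ¬ (i ∈ (treeOf x xs).leaves ∧ j ∈ (treeOf x xs).leaves) := by
          rw [leaves_treeOf]
          simp only [List.mem_toFinset]
          exact fun h => hna h.2
        rw [if_neg h1, if_neg h2]
        have : (BTree.leaf j).leaves ∪ (treeOf x xs).leaves = (j :: x :: xs).toFinset := by
          rw [leaves_treeOf]
          simp [BTree.leaves, BTree.leavesList]
          ext b; simp; tauto
        rw [this, List.toFinset_card_of_nodup hn, List.idxOf_cons_self]
        simp
      · have hi' : i ∈ x :: xs := by
          rcases List.mem_cons.mp hi with h | h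
          · exact absurd h hia
          · exact h
        have hj' : j ∈ x :: xs := by
          rcases List.mem_cons.mp hj with h | h
          · exact absurd h hja
          · exact h
        rw [show treeOf a (x :: xs) = BTree.node (.leaf a) (treeOf x xs) from rfl]
        rw [BTree.lcaLeaves]
        have h1 : ¬ (i ∈ (BTree.leaf a).leaves ∧ j ∈ (BTree.leaf a).leaves) := by
          simp [BTree.leaves, BTree.leavesList]
          exact fun h => absurd h hia
        have h2 : i ∈ (treeOf x xs).leaves ∧ j ∈ (treeOf x xs).leaves := by
          rw [leaves_treeOf]
          simp only [List.mem_toFinset]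
          exact ⟨hi', hj'⟩
        rw [if_neg h1, if_pos h2]
        rw [card_lca_treeOf xs x i j hnt hi' hj' hij]
        rw [List.idxOf_cons_ne _ (fun h => hia h.symm), List.idxOf_cons_ne _ (fun h => hja h.symm)]
        simp [Nat.succ_min_succ, Nat.succ_sub_succ, List.length_cons]


lemma indexOf_map {α β : Type} [DecidableEq α] [DecidableEq β] {f : α → β}
    (hf : Function.Injective f) :
    ∀ (l : List α) (a : α), (l.map f).idxOf (f a) = l.idxOf a
  | [], _ => rfl
  | x :: xs, a => by
    by_cases h : x = a
    · subst h; simp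
    · rw [List.map_cons, List.idxOf_cons_ne _ (fun hc => h (hf hc)),
        List.idxOf_cons_ne _ h, indexOf_map hf xs a]

def permTree (m : ℕ) (σ : Equiv.Perm (Fin (m+1))) : BTree (Fin (m+1)) :=
  treeOf (σ 0) ((List.finRange m).map (fun k => σ k.succ))

lemma cons_eq (m : ℕ) (σ : Equiv.Perm (Fin (m+1))) :
    σ 0 :: (List.finRange m).map (fun k => σ k.succ) = (List.finRange (m+1)).map σ := by
  rw [List.finRange_succ, List.map_cons, List.map_map]
  rfl

lemma nodup_mapPerm (m : ℕ) (σ : Equiv.Perm (Fin (m+1))) :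
    ((List.finRange (m+1)).map σ).Nodup :=
  (List.nodup_finRange _).map σ.injective

lemma mem_mapPerm (m : ℕ) (σ : Equiv.Perm (Fin (m+1))) (i : Fin (m+1)) :
    i ∈ (List.finRange (m+1)).map σ :=
  List.mem_map.mpr ⟨σ.symm i, List.mem_finRange _, σ.apply_symm_apply i⟩

lemma indexOf_mapPerm (m : ℕ) (σ : Equiv.Perm (Fin (m+1))) (i : Fin (m+1)) :
    ((List.finRange (m+1)).map σ).idxOf i = (σ.symm i : ℕ) := by
  conv_lhs => rw [← σ.apply_symm_apply i]
  rw [indexOf_map σ.injective, List.idxOf_finRange]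

lemma isHC_permTree (m : ℕ) (σ : Equiv.Perm (Fin (m+1))) : (permTree m σ).IsHC := by
  constructor
  · show (treeOf _ _).leavesList.Nodup
    rw [leavesList_treeOf, cons_eq]
    exact nodup_mapPerm m σ
  · show (treeOf _ _).leaves = _
    rw [BTree.leaves, leavesList_treeOf, cons_eq]
    apply Finset.eq_univ_iff_forall.mpr
    intro k
    exact List.mem_toFinset.mpr (mem_mapPerm m σ k)

lemma card_lca_permTree (m : ℕ) (σ : Equiv.Perm (Fin (m+1))) (i j : Fin (m+1))
    (hij : i ≠ j) :
    ((permTree m σ).lcaLeaves i j).card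
      = (m+1) - min ((σ.symm i : Fin (m+1)) : ℕ) ((σ.symm j : Fin (m+1)) : ℕ) := by
  have h := card_lca_treeOf ((List.finRange m).map (fun k => σ k.succ)) (σ 0) i j
  rw [cons_eq] at h
  show ((treeOf _ _).lcaLeaves i j).card = _
  rw [h (nodup_mapPerm m σ) (mem_mapPerm m σ i) (mem_mapPerm m σ j) hij,
    indexOf_mapPerm, indexOf_mapPerm]
  simp


lemma gauss (n : ℕ) : (∑ a ∈ Finset.range n, (a : ℝ)) * 2 = n * (n - 1) := by
  induction n with
  | zero => simp
  | succ n ih =>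
    rw [Finset.sum_range_succ]
    push_cast
    push_cast at ih
    nlinarith [ih]

lemma qsum (n : ℕ) :
    (∑ a ∈ Finset.range n, ∑ b ∈ Finset.range n, ((min a b : ℕ) : ℝ)) * 6
      = n * (n - 1) * (2 * n - 1) := by
  induction n with
  | zero => simp
  | succ n ih =>
    simp_rw [Finset.sum_range_succ]
    rw [Finset.sum_add_distrib]
    have h1 : ∑ a ∈ Finset.range n, ((min a n : ℕ) : ℝ) = ∑ a ∈ Finset.range n, (a : ℝ) :=
      Finset.sum_congr rfl fun a ha => by
        rw [min_eq_left (le_of_lt (Finset.mem_range.mp ha))]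
    have h2 : ∑ b ∈ Finset.range n, ((min n b : ℕ) : ℝ) = ∑ b ∈ Finset.range n, (b : ℝ) :=
      Finset.sum_congr rfl fun b hb => by
        rw [min_eq_right (le_of_lt (Finset.mem_range.mp hb))]
    rw [h1, h2, min_self]
    push_cast
    push_cast at ih
    nlinarith [ih, gauss n]

lemma sum_diag' {α : Type} [DecidableEq α] (s : Finset α) (f : α × α → ℝ) :
    ∑ p ∈ s.diag, f p = ∑ a ∈ s, f (a, a) := by
  refine Finset.sum_bij (fun p _ => p.1) ?_ ?_ ?_ ?_
  · intro p hp; exact (Finset.mem_diag.mp hp).1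
  · rintro ⟨x, y⟩ hp ⟨x', y'⟩ hq h
    obtain ⟨_, h2⟩ := Finset.mem_diag.mp hp
    obtain ⟨_, h2'⟩ := Finset.mem_diag.mp hq
    have h' : x = x' := h
    simp only at h2 h2'
    subst h2; subst h2'; subst h'; rfl
  · intro a ha; exact ⟨(a, a), Finset.mem_diag.mpr ⟨ha, rfl⟩, rfl⟩
  · rintro ⟨x, y⟩ hp
    obtain ⟨_, h2⟩ := Finset.mem_diag.mp hp
    simp only at h2
    subst h2; rfl

lemma Kr_eq (N : ℕ) :
    (∑ p ∈ (Finset.univ : Finset (Fin N)).offDiag,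
        ((N - min (p.1 : ℕ) (p.2 : ℕ) : ℕ) : ℝ)) * 3
      = 2 * (N + 1) * N * (N - 1) := by
  set g : ℕ → ℕ → ℝ := fun a b => (N : ℝ) - ((min a b : ℕ) : ℝ) with hg
  have hcast : ∑ p ∈ (Finset.univ : Finset (Fin N)).offDiag,
        ((N - min (p.1 : ℕ) (p.2 : ℕ) : ℕ) : ℝ)
      = ∑ p ∈ (Finset.univ : Finset (Fin N)).offDiag, g (p.1 : ℕ) (p.2 : ℕ) :=
    Finset.sum_congr rfl fun p _ => by
      have h : min (p.1 : ℕ) (p.2 : ℕ) ≤ N := le_trans (min_le_left _ _) p.1.isLt.le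
      simp only [hg]
      rw [Nat.cast_sub h]
  have hinner : ∀ a : ℕ, ∑ b : Fin N, g a (b : ℕ) = ∑ b ∈ Finset.range N, g a b :=
    fun a => Fin.sum_univ_eq_sum_range (fun b => g a b) N
  have houter : ∑ a : Fin N, ∑ b ∈ Finset.range N, g (a : ℕ) b
      = ∑ a ∈ Finset.range N, ∑ b ∈ Finset.range N, g a b :=
    Fin.sum_univ_eq_sum_range (fun a => ∑ b ∈ Finset.range N, g a b) N
  have hprod : ∑ p ∈ (Finset.univ ×ˢ Finset.univ : Finset (Fin N × Fin N)),
        g (p.1 : ℕ) (p.2 : ℕ)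
      = ∑ a ∈ Finset.range N, ∑ b ∈ Finset.range N, g a b := by
    rw [Finset.sum_product]
    trans (∑ a : Fin N, ∑ b ∈ Finset.range N, g (a : ℕ) b)
    · exact Finset.sum_congr rfl fun a _ => hinner (a : ℕ)
    · exact houter
  have hdiag : ∑ p ∈ (Finset.univ : Finset (Fin N)).diag, g (p.1 : ℕ) (p.2 : ℕ)
      = ∑ a ∈ Finset.range N, g a a := by
    rw [sum_diag']
    exact Fin.sum_univ_eq_sum_range (fun a => g a a) N
  have hsplit : ∑ p ∈ (Finset.univ ×ˢ Finset.univ : Finset (Fin N × Fin N)),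
        g (p.1 : ℕ) (p.2 : ℕ)
      = ∑ p ∈ (Finset.univ : Finset (Fin N)).diag, g (p.1 : ℕ) (p.2 : ℕ)
        + ∑ p ∈ (Finset.univ : Finset (Fin N)).offDiag, g (p.1 : ℕ) (p.2 : ℕ) := by
    rw [← Finset.sum_union (Finset.disjoint_diag_offDiag _), Finset.diag_union_offDiag]
  have hoff : ∑ p ∈ (Finset.univ : Finset (Fin N)).offDiag, g (p.1 : ℕ) (p.2 : ℕ)
      = (∑ a ∈ Finset.range N, ∑ b ∈ Finset.range N, g a b)
        - ∑ a ∈ Finset.range N, g a a := by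
    rw [← hprod, hsplit, hdiag]; ring
  rw [hcast, hoff]
  simp only [hg, min_self, Finset.sum_sub_distrib, Finset.sum_const, Finset.card_range,
    nsmul_eq_mul]
  linear_combination (-1/2 : ℝ) * qsum N + (3/2 : ℝ) * gauss N

noncomputable def Sr (N : ℕ) (i j : Fin N) : ℝ :=
  ∑ σ : Equiv.Perm (Fin N),
    ((N - min ((σ.symm i : Fin N) : ℕ) ((σ.symm j : Fin N) : ℕ) : ℕ) : ℝ)

lemma Sr_const (N : ℕ) (i j a b : Fin N) (hij : i ≠ j) (hab : a ≠ b) :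
    Sr N a b = Sr N i j := by
  have hs : Equiv.swap i a j ≠ a := by
    intro h
    exact hij ((Equiv.swap i a).injective (h.trans (Equiv.swap_apply_left i a).symm)).symm
  set π : Equiv.Perm (Fin N) := (Equiv.swap i a).trans (Equiv.swap (Equiv.swap i a j) b)
    with hπ
  have hπi : π i = a := by
    show Equiv.swap (Equiv.swap i a j) b (Equiv.swap i a i) = a
    rw [Equiv.swap_apply_left, Equiv.swap_apply_of_ne_of_ne (Ne.symm hs) hab]
  have hπj : π j = b := by
    show Equiv.swap (Equiv.swap i a j) b (Equiv.swap i a j) = b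
    rw [Equiv.swap_apply_left]
  unfold Sr
  have hsum := Equiv.sum_comp (Equiv.mulLeft π.symm)
    (fun τ : Equiv.Perm (Fin N) =>
      ((N - min ((τ.symm i : Fin N) : ℕ) ((τ.symm j : Fin N) : ℕ) : ℕ) : ℝ))
  rw [← hsum]
  apply Finset.sum_congr rfl
  intro σ _
  have hmi : (Equiv.mulLeft π.symm σ).symm i = σ.symm a := by
    have h1 : (π.symm * σ)⁻¹ = σ⁻¹ * π := by
      rw [← Equiv.Perm.inv_def, mul_inv_rev, inv_inv]
    calc (Equiv.mulLeft π.symm σ).symm i = ((π.symm * σ)⁻¹ : Equiv.Perm (Fin N)) i := rfl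
      _ = ((σ⁻¹ * π : Equiv.Perm (Fin N))) i := by rw [h1]
      _ = σ.symm (π i) := rfl
      _ = σ.symm a := by rw [hπi]
  have hmj : (Equiv.mulLeft π.symm σ).symm j = σ.symm b := by
    have h1 : (π.symm * σ)⁻¹ = σ⁻¹ * π := by
      rw [← Equiv.Perm.inv_def, mul_inv_rev, inv_inv]
    calc (Equiv.mulLeft π.symm σ).symm j = ((π.symm * σ)⁻¹ : Equiv.Perm (Fin N)) j := rfl
      _ = ((σ⁻¹ * π : Equiv.Perm (Fin N))) j := by rw [h1]
      _ = σ.symm (π j) := rfl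
      _ = σ.symm b := by rw [hπj]
  rw [hmi, hmj]

lemma Sr_sum (N : ℕ) :
    ∑ p ∈ (Finset.univ : Finset (Fin N)).offDiag, Sr N p.1 p.2
      = (Fintype.card (Equiv.Perm (Fin N)) : ℝ)
        * ∑ p ∈ (Finset.univ : Finset (Fin N)).offDiag,
            ((N - min (p.1 : ℕ) (p.2 : ℕ) : ℕ) : ℝ) := by
  unfold Sr
  rw [Finset.sum_comm]
  have inner : ∀ σ : Equiv.Perm (Fin N),
      ∑ p ∈ (Finset.univ : Finset (Fin N)).offDiag,
          ((N - min ((σ.symm p.1 : Fin N) : ℕ) ((σ.symm p.2 : Fin N) : ℕ) : ℕ) : ℝ)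
        = ∑ p ∈ (Finset.univ : Finset (Fin N)).offDiag,
            ((N - min (p.1 : ℕ) (p.2 : ℕ) : ℕ) : ℝ) := by
    intro σ
    apply Finset.sum_nbij' (fun p => (σ.symm p.1, σ.symm p.2)) (fun p => (σ p.1, σ p.2))
    · intro p hp
      obtain ⟨-, -, hne⟩ := Finset.mem_offDiag.mp hp
      exact Finset.mem_offDiag.mpr ⟨Finset.mem_univ _, Finset.mem_univ _,
        fun h => hne (σ.symm.injective h)⟩
    · intro p hp
      obtain ⟨-, -, hne⟩ := Finset.mem_offDiag.mp hp
      exact Finset.mem_offDiag.mpr ⟨Finset.mem_univ _, Finset.mem_univ _,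
        fun h => hne (σ.injective h)⟩
    · intro p _; simp
    · intro p _; simp
    · intro p _; rfl
  rw [Finset.sum_congr rfl fun σ _ => inner σ]
  rw [Finset.sum_const, Finset.card_univ, nsmul_eq_mul]

lemma Sr_ge (N : ℕ) (i j : Fin N) (hij : i ≠ j) :
    (2 * ((N : ℝ) - 2) / 3) * (Fintype.card (Equiv.Perm (Fin N)) : ℝ) ≤ Sr N i j := by
  have hN : 2 ≤ N := by
    by_contra h
    push_neg at h
    have h1 : (i : ℕ) < N := i.isLt
    have h2 : (j : ℕ) < N := j.isLt
    exact hij (Fin.ext (by omega))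
  have hNr : (2 : ℝ) ≤ N := by exact_mod_cast hN
  set P : ℝ := (Fintype.card (Equiv.Perm (Fin N)) : ℝ) with hP
  have hP0 : 0 ≤ P := Nat.cast_nonneg _
  set K : ℝ := ∑ p ∈ (Finset.univ : Finset (Fin N)).offDiag,
      ((N - min (p.1 : ℕ) (p.2 : ℕ) : ℕ) : ℝ) with hK
  have hconst : ∑ p ∈ (Finset.univ : Finset (Fin N)).offDiag, Sr N p.1 p.2
      = ((Finset.univ : Finset (Fin N)).offDiag.card : ℝ) * Sr N i j := by
    rw [Finset.sum_congr rfl fun p hp =>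
      Sr_const N i j p.1 p.2 hij (Finset.mem_offDiag.mp hp).2.2]
    rw [Finset.sum_const, nsmul_eq_mul]
  have hcardOff : (((Finset.univ : Finset (Fin N)).offDiag.card : ℕ) : ℝ)
      = (N : ℝ) * N - N := by
    rw [Finset.offDiag_card, Finset.card_univ, Fintype.card_fin]
    have hle : N ≤ N * N := Nat.le_mul_of_pos_left N (by omega)
    push_cast [Nat.cast_sub hle]
    ring
  have heq : ((N : ℝ) * N - N) * Sr N i j = P * K := by
    rw [← hcardOff, ← hconst, hK, Sr_sum]
  have hKval : K * 3 = 2 * ((N : ℝ) + 1) * N * (N - 1) := Kr_eq N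
  have hpos : (0 : ℝ) < (N : ℝ) * N - N := by nlinarith
  have hcancel : 3 * Sr N i j = 2 * ((N : ℝ) + 1) * P := by
    have h3 : (3 * Sr N i j) * ((N : ℝ) * N - N)
        = (2 * ((N : ℝ) + 1) * P) * ((N : ℝ) * N - N) := by
      nlinarith [heq, hKval]
    exact mul_right_cancel₀ (ne_of_gt hpos) h3
  nlinarith [hcancel, hP0]

end Stmt8Aux

/-- If `T` maximizes the dissimilarity objective over all hierarchical clustering trees on
`[n]`, then `dis(T) ≥ (2(n-2)/3) ∑_{i<j} w_{ij}`. -/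
theorem stmt8 (n : ℕ) (w : Fin n → Fin n → ℝ)
    (hw : ∀ i j, 0 ≤ w i j ∧ w i j ≤ 1)
    (T : BTree (Fin n)) (hT : T.IsHC)
    (hopt : ∀ S : BTree (Fin n), S.IsHC → dis n w S ≤ dis n w T) :
    dis n w T ≥ (2 * ((n : ℝ) - 2) / 3) * ∑ q ∈ pairsFin n, w q.1 q.2 := by
  rcases n with _ | m
  · have h0 : pairsFin 0 = ∅ := by
      apply Finset.eq_empty_of_forall_notMem
      intro q _
      exact q.1.elim0
    simp [dis, h0]
  · set P : ℝ := (Fintype.card (Equiv.Perm (Fin (m+1))) : ℝ) with hPdef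
    have hP : 0 < P := by
      rw [hPdef]
      exact_mod_cast Fintype.card_pos
    have hdisσ : ∀ σ : Equiv.Perm (Fin (m+1)), dis (m+1) w (Stmt8Aux.permTree m σ)
        = ∑ q ∈ pairsFin (m+1), w q.1 q.2
            * (((m+1) - min ((σ.symm q.1 : Fin (m+1)) : ℕ) ((σ.symm q.2 : Fin (m+1)) : ℕ) : ℕ) : ℝ) := by
      intro σ
      unfold dis
      apply Finset.sum_congr rfl
      intro q hq
      have hne : q.1 ≠ q.2 := ne_of_lt (Finset.mem_filter.mp hq).2
      rw [Stmt8Aux.card_lca_permTree m σ q.1 q.2 hne]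
    have h1 : ∑ σ : Equiv.Perm (Fin (m+1)), dis (m+1) w (Stmt8Aux.permTree m σ)
        ≤ P * dis (m+1) w T := by
      calc ∑ σ : Equiv.Perm (Fin (m+1)), dis (m+1) w (Stmt8Aux.permTree m σ)
          ≤ ∑ _σ : Equiv.Perm (Fin (m+1)), dis (m+1) w T :=
            Finset.sum_le_sum fun σ _ => hopt _ (Stmt8Aux.isHC_permTree m σ)
        _ = P * dis (m+1) w T := by
            rw [Finset.sum_const, Finset.card_univ, nsmul_eq_mul]
    have h2 : ∑ σ : Equiv.Perm (Fin (m+1)), dis (m+1) w (Stmt8Aux.permTree m σ)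
        = ∑ q ∈ pairsFin (m+1), w q.1 q.2 * Stmt8Aux.Sr (m+1) q.1 q.2 := by
      rw [Finset.sum_congr rfl fun σ _ => hdisσ σ, Finset.sum_comm]
      apply Finset.sum_congr rfl
      intro q _
      rw [Stmt8Aux.Sr, ← Finset.mul_sum]
    have h3 : ∀ q ∈ pairsFin (m+1),
        (2 * (((m+1 : ℕ) : ℝ) - 2) / 3) * P * w q.1 q.2 ≤ w q.1 q.2 * Stmt8Aux.Sr (m+1) q.1 q.2 := by
      intro q hq
      have hne : q.1 ≠ q.2 := ne_of_lt (Finset.mem_filter.mp hq).2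
      have hSr := Stmt8Aux.Sr_ge (m+1) q.1 q.2 hne
      have hw0 := (hw q.1 q.2).1
      calc (2 * (((m+1 : ℕ) : ℝ) - 2) / 3) * P * w q.1 q.2
          = w q.1 q.2 * ((2 * (((m+1 : ℕ) : ℝ) - 2) / 3) * P) := by ring
        _ ≤ w q.1 q.2 * Stmt8Aux.Sr (m+1) q.1 q.2 := mul_le_mul_of_nonneg_left hSr hw0
    have h4 : P * ((2 * (((m+1 : ℕ) : ℝ) - 2) / 3) * ∑ q ∈ pairsFin (m+1), w q.1 q.2)
        ≤ P * dis (m+1) w T := by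
      calc P * ((2 * (((m+1 : ℕ) : ℝ) - 2) / 3) * ∑ q ∈ pairsFin (m+1), w q.1 q.2)
          = ∑ q ∈ pairsFin (m+1), (2 * (((m+1 : ℕ) : ℝ) - 2) / 3) * P * w q.1 q.2 := by
            rw [Finset.mul_sum, Finset.mul_sum]
            exact Finset.sum_congr rfl fun q _ => by ring
        _ ≤ ∑ q ∈ pairsFin (m+1), w q.1 q.2 * Stmt8Aux.Sr (m+1) q.1 q.2 := Finset.sum_le_sum h3
        _ = ∑ σ : Equiv.Perm (Fin (m+1)), dis (m+1) w (Stmt8Aux.permTree m σ) := h2.symm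
        _ ≤ P * dis (m+1) w T := h1
    exact (mul_le_mul_iff_right₀ hP).mp h4
end

section
/- For the all-ones clique on n leaves, every binary tree T satisfies ∑_{i<j} |T_{ij}| = (n³ − n)/3. -/
open Finset

namespace BTree

lemma lcaLeaves_symm {α : Type} [DecidableEq α] (t : BTree α) (i j : α) :
    t.lcaLeaves i j = t.lcaLeaves j i := by
  induction t with
  | leaf a => rfl
  | node l r ihl ihr =>
    simp only [lcaLeaves]
    split_ifs <;> first | rfl | exact ihl | exact ihr | tauto

lemma key {α : Type} [DecidableEq α] (t : BTree α) (hnd : t.leavesList.Nodup) :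
    3 * ∑ p ∈ t.leaves.offDiag, (t.lcaLeaves p.1 p.2).card + 2 * t.leaves.card
      = 2 * t.leaves.card ^ 3 := by
  induction t with
  | leaf a => simp [leaves, leavesList]
  | node l r ihl ihr =>
    have hnd' : (l.leavesList ++ r.leavesList).Nodup := hnd
    rw [List.nodup_append] at hnd'
    obtain ⟨hl, hr, hdis⟩ := hnd'
    have hd : Disjoint l.leaves r.leaves := by
      rw [Finset.disjoint_left]
      intro x hx hx'
      simp only [leaves, List.mem_toFinset] at hx hx'
      exact hdis x hx x hx' rfl
    have hleaves : (node l r).leaves = l.leaves ∪ r.leaves := by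
      simp [leaves, leavesList]
    -- values of lca on the parts
    have hval1 : ∀ p ∈ l.leaves.offDiag, ((node l r).lcaLeaves p.1 p.2).card
        = (l.lcaLeaves p.1 p.2).card := by
      intro p hp
      rw [Finset.mem_offDiag] at hp
      simp only [lcaLeaves]
      rw [if_pos ⟨hp.1, hp.2.1⟩]
    have hval2 : ∀ p ∈ r.leaves.offDiag, ((node l r).lcaLeaves p.1 p.2).card
        = (r.lcaLeaves p.1 p.2).card := by
      intro p hp
      rw [Finset.mem_offDiag] at hp
      have h1 : ¬(p.1 ∈ l.leaves ∧ p.2 ∈ l.leaves) := by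
        intro h; exact (Finset.disjoint_left.mp hd h.1) hp.1
      simp only [lcaLeaves]
      rw [if_neg h1, if_pos ⟨hp.1, hp.2.1⟩]
    have hvalc : ∀ p ∈ l.leaves ×ˢ r.leaves, ((node l r).lcaLeaves p.1 p.2).card
        = l.leaves.card + r.leaves.card := by
      intro p hp
      rw [Finset.mem_product] at hp
      have h1 : ¬(p.1 ∈ l.leaves ∧ p.2 ∈ l.leaves) := by
        intro h; exact (Finset.disjoint_left.mp hd h.2) hp.2
      have h2 : ¬(p.1 ∈ r.leaves ∧ p.2 ∈ r.leaves) := by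
        intro h; exact (Finset.disjoint_left.mp hd hp.1) h.1
      simp only [lcaLeaves]
      rw [if_neg h1, if_neg h2]
      exact Finset.card_union_of_disjoint hd
    have hvalc' : ∀ p ∈ r.leaves ×ˢ l.leaves, ((node l r).lcaLeaves p.1 p.2).card
        = l.leaves.card + r.leaves.card := by
      intro p hp
      rw [Finset.mem_product] at hp
      have h1 : ¬(p.1 ∈ l.leaves ∧ p.2 ∈ l.leaves) := by
        intro h; exact (Finset.disjoint_left.mp hd h.1) hp.1
      have h2 : ¬(p.1 ∈ r.leaves ∧ p.2 ∈ r.leaves) := by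
        intro h; exact (Finset.disjoint_left.mp hd hp.2) h.2
      simp only [lcaLeaves]
      rw [if_neg h1, if_neg h2]
      exact Finset.card_union_of_disjoint hd
    -- disjointness of the pieces
    have d1 : Disjoint (l.leaves.offDiag ∪ r.leaves.offDiag ∪ l.leaves ×ˢ r.leaves)
        (r.leaves ×ˢ l.leaves) := by
      rw [Finset.disjoint_left]
      rintro ⟨x, y⟩ hx hy
      rw [Finset.mem_product] at hy
      rcases Finset.mem_union.mp hx with hx | hx
      · rcases Finset.mem_union.mp hx with hx | hx
        · rw [Finset.mem_offDiag] at hx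
          exact (Finset.disjoint_left.mp hd hx.1) hy.1
        · rw [Finset.mem_offDiag] at hx
          exact (Finset.disjoint_left.mp hd hy.2) hx.2.1
      · rw [Finset.mem_product] at hx
        exact (Finset.disjoint_left.mp hd hx.1) hy.1
    have d2 : Disjoint (l.leaves.offDiag ∪ r.leaves.offDiag) (l.leaves ×ˢ r.leaves) := by
      rw [Finset.disjoint_left]
      rintro ⟨x, y⟩ hx hy
      rw [Finset.mem_product] at hy
      rcases Finset.mem_union.mp hx with hx | hx
      · rw [Finset.mem_offDiag] at hx
        exact (Finset.disjoint_left.mp hd hx.2.1) hy.2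
      · rw [Finset.mem_offDiag] at hx
        exact (Finset.disjoint_left.mp hd hy.1) hx.1

    have d3 : Disjoint l.leaves.offDiag r.leaves.offDiag := by
      rw [Finset.disjoint_left]
      rintro ⟨x, y⟩ hx hy
      rw [Finset.mem_offDiag] at hx hy
      exact (Finset.disjoint_left.mp hd hx.1) hy.1
    rw [hleaves, Finset.offDiag_union hd, Finset.sum_union d1, Finset.sum_union d2,
      Finset.sum_union d3, Finset.sum_congr rfl hval1, Finset.sum_congr rfl hval2,
      Finset.sum_congr rfl hvalc, Finset.sum_congr rfl hvalc',
      Finset.sum_const, Finset.sum_const, Finset.card_product, Finset.card_product,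
      Finset.card_union_of_disjoint hd]
    have := ihl hl
    have := ihr hr
    set a := l.leaves.card
    set b := r.leaves.card
    set Sl := ∑ p ∈ l.leaves.offDiag, (l.lcaLeaves p.1 p.2).card
    set Sr := ∑ p ∈ r.leaves.offDiag, (r.lcaLeaves p.1 p.2).card
    simp only [smul_eq_mul]
    zify at *
    linear_combination ihl hl + ihr hr

end BTree

/-- For the all-ones clique of `n` leaves, every binary tree `t` satisfies
`∑_{i<j} |T_{ij}| = (n³ - n)/3`. -/
theorem stmt15 (n : ℕ) (t : BTree (Fin n)) (ht : t.IsHC) :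
    ∑ q ∈ pairsFin n, (t.lcaLeaves q.1 q.2).card = (n ^ 3 - n) / 3 := by
  have hkey := BTree.key t ht.1
  rw [ht.2, Finset.card_univ, Fintype.card_fin] at hkey
  have hoff : (Finset.univ : Finset (Fin n)).offDiag
      = pairsFin n ∪ Finset.univ.filter (fun p : Fin n × Fin n => p.2 < p.1) := by
    ext ⟨i, j⟩
    simp only [pairsFin, Finset.mem_union, Finset.mem_filter, Finset.mem_offDiag,
      Finset.mem_univ, true_and]
    constructor
    · exact fun h => lt_or_gt_of_ne h
    · rintro (h | h)
      · exact ne_of_lt h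
      · exact (ne_of_lt h).symm
  have hdisj : Disjoint (pairsFin n) (Finset.univ.filter (fun p : Fin n × Fin n => p.2 < p.1)) := by
    rw [Finset.disjoint_left]
    rintro ⟨i, j⟩ h1 h2
    simp [pairsFin] at h1 h2
    exact absurd h2 (not_lt.mpr h1.le)
  have hswap : ∑ q ∈ Finset.univ.filter (fun p : Fin n × Fin n => p.2 < p.1),
      (t.lcaLeaves q.1 q.2).card = ∑ q ∈ pairsFin n, (t.lcaLeaves q.1 q.2).card := by
    apply Finset.sum_bij' (fun p _ => Prod.swap p) (fun p _ => Prod.swap p)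
    · rintro ⟨i, j⟩ h; simp [pairsFin] at h ⊢; exact h
    · rintro ⟨i, j⟩ h; simp [pairsFin] at h ⊢; exact h
    · rintro ⟨i, j⟩ _; rfl
    · rintro ⟨i, j⟩ _; rfl
    · rintro ⟨i, j⟩ _; exact congrArg Finset.card (BTree.lcaLeaves_symm t i j)
  rw [hoff, Finset.sum_union hdisj, hswap] at hkey
  have hle : n ≤ n ^ 3 := Nat.le_self_pow (by norm_num) n
  omega
end

section
/- Let w^s, w^d : pairs of [n] → [0,1] with w^s_{ij} = 1 − w^d_{ij}. Then for every binary tree T on n leaves, hcc(T) = 2∑_{i<j} w^d_{ij}|T_{ij}| + (n choose 3) − n·∑_{i<j} w^d_{ij}, where hcc(T) = ∑_{i<j} w^s_{ij}(n − |T_{ij}|) + ∑_{i<j} w^d_{ij}|T_{ij}|. In particular, T maximizes hcc if and only if T maximizes ∑ w^d_{ij}|T_{ij}|. -/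
open Finset

namespace Scratch
open BTree

lemma two_mul_choose_two (n : ℕ) : 2 * n.choose 2 = n * (n - 1) := by
  induction n with
  | zero => rfl
  | succ m ih =>
    rw [Nat.choose_succ_succ, Nat.mul_add, ih, Nat.choose_one_right]
    cases m with
    | zero => rfl
    | succ k => simp [Nat.succ_sub_one]; ring

lemma choose_add_three (a b : ℕ) :
    (a + b).choose 3 = a.choose 3 + b.choose 3 + a * b.choose 2 + b * a.choose 2 := by
  rw [Nat.add_choose_eq]
  rw [show Finset.HasAntidiagonal.antidiagonal 3 = {(0,3),(1,2),(2,1),(3,0)} from rfl]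
  simp [Nat.choose_one_right]
  ring

variable {α : Type} [DecidableEq α]

lemma leaves_node (l r : BTree α) : (BTree.node l r).leaves = l.leaves ∪ r.leaves := by
  simp [BTree.leaves, BTree.leavesList]

lemma leaves_nonempty (t : BTree α) : t.leaves.Nonempty := by
  induction t with
  | leaf a => exact ⟨a, by simp [BTree.leaves, BTree.leavesList]⟩
  | node l r ihl ihr => rw [leaves_node]; exact ihl.mono Finset.subset_union_left

lemma lca_symm (t : BTree α) (i j : α) : t.lcaLeaves i j = t.lcaLeaves j i := by
  induction t with
  | leaf a => rfl
  | node l r ihl ihr =>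
    simp only [BTree.lcaLeaves]
    by_cases hil : i ∈ l.leaves <;> by_cases hjl : j ∈ l.leaves <;>
      by_cases hir : i ∈ r.leaves <;> by_cases hjr : j ∈ r.leaves <;>
      simp [hil, hjl, hir, hjr, ihl, ihr]

lemma nodup_node {l r : BTree α} (h : (BTree.node l r).leavesList.Nodup) :
    l.leavesList.Nodup ∧ r.leavesList.Nodup ∧ Disjoint l.leaves r.leaves := by
  rw [show (BTree.node l r).leavesList = l.leavesList ++ r.leavesList from rfl,
    List.nodup_append] at h
  exact ⟨h.1, h.2.1, Finset.disjoint_left.2 fun x hx hx' =>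
    h.2.2 x (List.mem_toFinset.1 hx) x (List.mem_toFinset.1 hx') rfl⟩

lemma key (t : BTree α) (h : t.leavesList.Nodup) :
    ∑ i ∈ t.leaves, ∑ j ∈ t.leaves,
      (if i ≠ j then ((t.leaves.card : ℤ) - ((t.lcaLeaves i j).card : ℤ)) else 0)
      = 2 * ((t.leaves.card).choose 3 : ℤ) := by
  induction t with
  | leaf a => simp [BTree.leaves, BTree.leavesList]; rfl
  | node l r ihl ihr =>
    obtain ⟨hl, hr, hd⟩ := nodup_node h
    have ihl := ihl hl
    have ihr := ihr hr
    set A := l.leaves with hA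
    set B := r.leaves with hB
    have hiA : ∀ i ∈ A, i ∉ B := fun i hi => Finset.disjoint_left.1 hd hi
    have hiB : ∀ i ∈ B, i ∉ A := fun i hi => Finset.disjoint_right.1 hd hi
    have lcaAA : ∀ i ∈ A, ∀ j ∈ A, (BTree.node l r).lcaLeaves i j = l.lcaLeaves i j := by
      intro i hi j hj; simp [BTree.lcaLeaves, ← hA, hi, hj]
    have lcaBB : ∀ i ∈ B, ∀ j ∈ B, (BTree.node l r).lcaLeaves i j = r.lcaLeaves i j := by
      intro i hi j hj; simp [BTree.lcaLeaves, ← hA, ← hB, hi, hj, hiB i hi]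
    have lcaAB : ∀ i ∈ A, ∀ j ∈ B, (BTree.node l r).lcaLeaves i j = A ∪ B := by
      intro i hi j hj; simp [BTree.lcaLeaves, ← hA, ← hB, hiA i hi, hiB j hj]
    have lcaBA : ∀ i ∈ B, ∀ j ∈ A, (BTree.node l r).lcaLeaves i j = A ∪ B := by
      intro i hi j hj; simp [BTree.lcaLeaves, ← hA, ← hB, hiA j hj, hiB i hi]
    rw [leaves_node, ← hA, ← hB]
    set m := (A ∪ B).card with hm
    have hmn : m = A.card + B.card := Finset.card_union_of_disjoint hd
    have hmab : (m : ℤ) = (A.card : ℤ) + B.card := by rw [hmn]; push_cast; ring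
    have ha1 : 1 ≤ A.card := Finset.card_pos.2 (leaves_nonempty l)
    have hb1 : 1 ≤ B.card := Finset.card_pos.2 (leaves_nonempty r)
    -- cross blocks vanish
    have SAB : ∑ i ∈ A, ∑ j ∈ B,
        (if i ≠ j then ((m : ℤ) - (((BTree.node l r).lcaLeaves i j).card : ℤ)) else 0) = 0 := by
      apply Finset.sum_eq_zero; intro i hi; apply Finset.sum_eq_zero; intro j hj
      rw [lcaAB i hi j hj, ← hm]; split_ifs <;> simp
    have SBA : ∑ i ∈ B, ∑ j ∈ A,
        (if i ≠ j then ((m : ℤ) - (((BTree.node l r).lcaLeaves i j).card : ℤ)) else 0) = 0 := by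
      apply Finset.sum_eq_zero; intro i hi; apply Finset.sum_eq_zero; intro j hj
      rw [lcaBA i hi j hj, ← hm]; split_ifs <;> simp
    -- diagonal blocks
    have diag : ∀ (S : Finset α) (u : BTree α), S = u.leaves →
        (∀ i ∈ S, ∀ j ∈ S, (BTree.node l r).lcaLeaves i j = u.lcaLeaves i j) →
        (∑ i ∈ S, ∑ j ∈ S, (if i ≠ j then ((S.card : ℤ) - ((u.lcaLeaves i j).card : ℤ)) else 0)
          = 2 * ((S.card).choose 3 : ℤ)) →
        1 ≤ S.card →
        ∑ i ∈ S, ∑ j ∈ S,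
          (if i ≠ j then ((m : ℤ) - (((BTree.node l r).lcaLeaves i j).card : ℤ)) else 0)
          = 2 * ((S.card).choose 3 : ℤ) + (S.card : ℤ) * ((S.card : ℤ) - 1) * ((m : ℤ) - S.card) := by
      intro S u hSu hlca ih hS1
      have step : ∀ i ∈ S, ∑ j ∈ S,
          (if i ≠ j then ((m : ℤ) - (((BTree.node l r).lcaLeaves i j).card : ℤ)) else 0)
          = (∑ j ∈ S, (if i ≠ j then ((S.card : ℤ) - ((u.lcaLeaves i j).card : ℤ)) else 0))
            + ((S.card : ℤ) - 1) * ((m : ℤ) - S.card) := by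
        intro i hi
        have : ∀ j ∈ S,
            (if i ≠ j then ((m : ℤ) - (((BTree.node l r).lcaLeaves i j).card : ℤ)) else 0)
            = (if i ≠ j then ((S.card : ℤ) - ((u.lcaLeaves i j).card : ℤ)) else 0)
              + (if i ≠ j then ((m : ℤ) - S.card) else 0) := by
          intro j hj
          rw [hlca i hi j hj]
          split_ifs <;> ring
        rw [Finset.sum_congr rfl this, Finset.sum_add_distrib]
        congr 1
        rw [← Finset.sum_filter, Finset.filter_ne, Finset.sum_const,
          Finset.card_erase_of_mem hi, nsmul_eq_mul]
        have : ((S.card - 1 : ℕ) : ℤ) = (S.card : ℤ) - 1 := by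
          push_cast [hS1]; ring
        rw [this]
      rw [Finset.sum_congr rfl step, Finset.sum_add_distrib, ih, Finset.sum_const, nsmul_eq_mul]
      ring
    have SAA := diag A l hA (fun i hi j hj => lcaAA i hi j hj) ihl ha1
    have SBB := diag B r hB (fun i hi j hj => lcaBB i hi j hj) ihr hb1
    rw [Finset.sum_union hd]
    have splitA : ∑ i ∈ A, ∑ j ∈ A ∪ B,
        (if i ≠ j then ((m : ℤ) - (((BTree.node l r).lcaLeaves i j).card : ℤ)) else 0)
        = (∑ i ∈ A, ∑ j ∈ A, (if i ≠ j then ((m : ℤ) - (((BTree.node l r).lcaLeaves i j).card : ℤ)) else 0))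
          + ∑ i ∈ A, ∑ j ∈ B, (if i ≠ j then ((m : ℤ) - (((BTree.node l r).lcaLeaves i j).card : ℤ)) else 0) := by
      rw [← Finset.sum_add_distrib]; exact Finset.sum_congr rfl fun i _ => Finset.sum_union hd
    have splitB : ∑ i ∈ B, ∑ j ∈ A ∪ B,
        (if i ≠ j then ((m : ℤ) - (((BTree.node l r).lcaLeaves i j).card : ℤ)) else 0)
        = (∑ i ∈ B, ∑ j ∈ A, (if i ≠ j then ((m : ℤ) - (((BTree.node l r).lcaLeaves i j).card : ℤ)) else 0))
          + ∑ i ∈ B, ∑ j ∈ B, (if i ≠ j then ((m : ℤ) - (((BTree.node l r).lcaLeaves i j).card : ℤ)) else 0) := by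
      rw [← Finset.sum_add_distrib]; exact Finset.sum_congr rfl fun i _ => Finset.sum_union hd
    rw [splitA, splitB, SAB, SBA, SAA, SBB]
    have ha2 : (A.card : ℤ) * ((A.card : ℤ) - 1) = 2 * (A.card.choose 2 : ℤ) := by
      have := two_mul_choose_two A.card; zify [ha1] at this; linarith
    have hb2 : (B.card : ℤ) * ((B.card : ℤ) - 1) = 2 * (B.card.choose 2 : ℤ) := by
      have := two_mul_choose_two B.card; zify [hb1] at this; linarith
    have hch : (m.choose 3 : ℤ) = (A.card.choose 3 : ℤ) + B.card.choose 3
        + A.card * B.card.choose 2 + B.card * A.card.choose 2 := by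
      rw [hmn, choose_add_three]; push_cast; ring
    rw [hch]
    linear_combination ((A.card : ℤ) * ((A.card : ℤ) - 1)) * hmab
      + ((B.card : ℤ) * ((B.card : ℤ) - 1)) * hmab
      + (B.card : ℤ) * ha2 + (A.card : ℤ) * hb2

lemma bridge (n : ℕ) (t : BTree (Fin n)) (hnd : t.leavesList.Nodup)
    (hu : t.leaves = Finset.univ) :
    ∑ q ∈ pairsFin n, ((n : ℤ) - ((t.lcaLeaves q.1 q.2).card : ℤ)) = (n.choose 3 : ℤ) := by
  have hk := key t hnd
  rw [hu, Finset.card_univ, Fintype.card_fin] at hk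
  rw [← Finset.sum_product'] at hk
  rw [Finset.univ_product_univ] at hk
  rw [← Finset.sum_filter] at hk
  set g : Fin n × Fin n → ℤ := fun q => (n : ℤ) - ((t.lcaLeaves q.1 q.2).card : ℤ) with hg
  have hsplit : (Finset.univ.filter fun p : Fin n × Fin n => p.1 ≠ p.2)
      = pairsFin n ∪ Finset.univ.filter (fun p : Fin n × Fin n => p.2 < p.1) := by
    ext p
    simp only [pairsFin, Finset.mem_filter, Finset.mem_union, Finset.mem_univ, true_and,
      Ne, Fin.ext_iff, Fin.lt_def]
    omega
  have hdisj : Disjoint (pairsFin n) (Finset.univ.filter fun p : Fin n × Fin n => p.2 < p.1) := by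
    rw [Finset.disjoint_left]
    intro p h1 h2
    simp only [pairsFin, Finset.mem_filter, Finset.mem_univ, true_and, Fin.lt_def] at h1 h2
    omega
  rw [hsplit, Finset.sum_union hdisj] at hk
  have hswap : ∑ q ∈ Finset.univ.filter (fun p : Fin n × Fin n => p.2 < p.1), g q
      = ∑ q ∈ pairsFin n, g q := by
    apply Finset.sum_nbij' (fun q : Fin n × Fin n => (q.2, q.1)) (fun q : Fin n × Fin n => (q.2, q.1))
    · intro a ha; simp only [Finset.mem_filter, Finset.mem_univ, true_and] at ha
      simp [pairsFin, ha]
    · intro a ha; simp only [pairsFin, Finset.mem_filter, Finset.mem_univ, true_and] at ha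
      simp [ha]
    · intro a _; rfl
    · intro a _; rfl
    · intro a _; simp only [hg, lca_symm]
  rw [hswap] at hk
  have : (2 : ℤ) * ∑ q ∈ pairsFin n, g q = 2 * (n.choose 3 : ℤ) := by rw [two_mul, hk]
  linarith

end Scratch

/-- For complementary weights `w^s = 1 - w^d`, every binary tree `T` on `n` leaves satisfies
`hcc(T) = 2 ∑ w^d_{ij}|T_{ij}| + C(n,3) - n ∑ w^d_{ij}`; consequently `T` maximizes `hcc`
iff it maximizes `∑ w^d_{ij}|T_{ij}|`. -/
theorem stmt19 (n : ℕ) (wd ws : Fin n → Fin n → ℝ)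
    (hwd : ∀ i j, 0 ≤ wd i j ∧ wd i j ≤ 1)
    (hws : ∀ i j, ws i j = 1 - wd i j) :
    (∀ t : BTree (Fin n), t.IsHC →
        rev n ws t + dis n wd t =
          2 * dis n wd t + (n.choose 3 : ℝ) - n * ∑ q ∈ pairsFin n, wd q.1 q.2) ∧
    (∀ t0 : BTree (Fin n), t0.IsHC →
        ((∀ t : BTree (Fin n), t.IsHC →
            rev n ws t + dis n wd t ≤ rev n ws t0 + dis n wd t0) ↔
          (∀ t : BTree (Fin n), t.IsHC → dis n wd t ≤ dis n wd t0))) := by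

  open Scratch in
  have hS : ∀ t : BTree (Fin n), t.IsHC →
      ∑ q ∈ pairsFin n, ((n : ℝ) - ((t.lcaLeaves q.1 q.2).card : ℝ)) = (n.choose 3 : ℝ) := by
    intro t ht
    have hb := Scratch.bridge n t ht.1 ht.2
    have : ((∑ q ∈ pairsFin n, ((n : ℤ) - ((t.lcaLeaves q.1 q.2).card : ℤ)) : ℤ) : ℝ)
        = ((n.choose 3 : ℤ) : ℝ) := by rw [hb]
    push_cast at this
    exact this
  have h1 : ∀ t : BTree (Fin n), rev n ws t
      = (∑ q ∈ pairsFin n, ((n : ℝ) - ((t.lcaLeaves q.1 q.2).card : ℝ)))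
        - ∑ q ∈ pairsFin n, wd q.1 q.2 * ((n : ℝ) - ((t.lcaLeaves q.1 q.2).card : ℝ)) := by
    intro t
    unfold rev
    rw [← Finset.sum_sub_distrib]
    exact Finset.sum_congr rfl fun q _ => by rw [hws]; ring
  have h2 : ∀ t : BTree (Fin n),
      ∑ q ∈ pairsFin n, wd q.1 q.2 * ((n : ℝ) - ((t.lcaLeaves q.1 q.2).card : ℝ))
      = (n : ℝ) * (∑ q ∈ pairsFin n, wd q.1 q.2) - dis n wd t := by
    intro t
    unfold dis
    rw [Finset.mul_sum, ← Finset.sum_sub_distrib]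
    exact Finset.sum_congr rfl fun q _ => by ring
  have part1 : ∀ t : BTree (Fin n), t.IsHC →
      rev n ws t + dis n wd t
        = 2 * dis n wd t + (n.choose 3 : ℝ) - n * ∑ q ∈ pairsFin n, wd q.1 q.2 := by
    intro t ht
    rw [h1 t, h2 t, hS t ht]
    ring
  refine ⟨part1, fun t0 ht0 => ?_⟩
  constructor
  · intro h t ht
    have e1 := part1 t ht
    have e2 := part1 t0 ht0
    have := h t ht
    linarith
  · intro h t ht
    have e1 := part1 t ht
    have e2 := part1 t0 ht0
    have := h t ht
    linarith
end
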